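/- arXiv:1806.02620 — 4 statements merged into one kernel-verified Lean document; each statement's English description precedes it below -/
import Mathlib

section
/- Let b > 0 and let φ : (0,b) → ℝ be twice differentiable with φ(s) − s·φ'(s) + (b² − s²)·φ''(s) = 0 for all s ∈ (0,b). Then there exist constants c₁, c₂ such that φ(s) = c₁·s + c₂·√(b² − s²) for all s ∈ (0,b). -/
/-!
The ODE has the explicit solutions `s` and `√(b² − s²)`. By Abel's formula the Wronskian of two
solutions is a constant multiple of `1 / √(b² − s²)`, so the Wronskians of `φ` with these two
solutions, rescaled by `√(b² − s²)`, are first integrals: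
`(φ − sφ') √(b² − s²) = k₁` and `sφ + (b² − s²) φ' = k₂`.
Eliminating `φ'` between them gives `b² φ = k₂ s + k₁ √(b² − s²)`.
-/

open Set

theorem exists_eq_const_of_hasDerivAt_zero {𝕜 G : Type*} [RCLike 𝕜] [NormedAddCommGroup G]
    [NormedSpace 𝕜 G] {f : 𝕜 → G} {s : Set 𝕜} (hs : IsOpen s) (hs' : IsPreconnected s)
    (hf : ∀ x ∈ s, HasDerivAt f 0 x) : ∃ a, ∀ x ∈ s, f x = a :=
  hs.exists_is_const_of_deriv_eq_zero hs'
    (fun x hx => (hf x hx).differentiableAt.differentiableWithinAt) fun x hx => (hf x hx).deriv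

theorem hasDerivAt_sqrt_sq_sub_sq {b s : ℝ} (hs : s ^ 2 < b ^ 2) :
    HasDerivAt (fun t => √(b ^ 2 - t ^ 2)) (-s / √(b ^ 2 - s ^ 2)) s := by
  have hpos : b ^ 2 - s ^ 2 ≠ 0 := (sub_pos.2 hs).ne'
  have hinner : HasDerivAt (fun t : ℝ => b ^ 2 - t ^ 2) (-(2 * s)) s := by
    simpa using (hasDerivAt_pow 2 s).const_sub (b ^ 2)
  refine ((Real.hasDerivAt_sqrt hpos).comp s hinner).congr_deriv ?_
  field_simp

section FirstIntegrals

variable {b s : ℝ} {φ φ' φ'' : ℝ → ℝ}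

theorem hasDerivAt_sub_mul_deriv_mul_sqrt (hφ : HasDerivAt φ (φ' s) s)
    (hφ' : HasDerivAt φ' (φ'' s) s) (hode : φ s - s * φ' s + (b ^ 2 - s ^ 2) * φ'' s = 0)
    (hs : s ^ 2 < b ^ 2) :
    HasDerivAt (fun t => (φ t - t * φ' t) * √(b ^ 2 - t ^ 2)) 0 s := by
  have hv : √(b ^ 2 - s ^ 2) * √(b ^ 2 - s ^ 2) = b ^ 2 - s ^ 2 :=
    Real.mul_self_sqrt (sub_nonneg.2 hs.le)
  have hv0 : √(b ^ 2 - s ^ 2) ≠ 0 := (Real.sqrt_pos.2 (sub_pos.2 hs)).ne'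
  refine ((hφ.sub ((hasDerivAt_id s).mul hφ')).mul (hasDerivAt_sqrt_sq_sub_sq hs)).congr_deriv ?_
  simp only [Pi.sub_apply, Pi.mul_apply, id]
  field_simp
  linear_combination (-s) * hode - s * φ'' s * hv

theorem hasDerivAt_mul_add_sq_sub_sq_mul_deriv (hφ : HasDerivAt φ (φ' s) s)
    (hφ' : HasDerivAt φ' (φ'' s) s) (hode : φ s - s * φ' s + (b ^ 2 - s ^ 2) * φ'' s = 0) :
    HasDerivAt (fun t => t * φ t + (b ^ 2 - t ^ 2) * φ' t) 0 s := by
  have hweight : HasDerivAt (fun t : ℝ => b ^ 2 - t ^ 2) (-(2 * s)) s := by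
    simpa using (hasDerivAt_pow 2 s).const_sub (b ^ 2)
  refine (((hasDerivAt_id s).mul hφ).add (hweight.mul hφ')).congr_deriv ?_
  simp only [id]
  linear_combination hode

end FirstIntegrals

theorem stmt2_general (b : ℝ) (φ φ' φ'' : ℝ → ℝ)
    (hd1 : ∀ s ∈ Ioo 0 b, HasDerivAt φ (φ' s) s)
    (hd2 : ∀ s ∈ Ioo 0 b, HasDerivAt φ' (φ'' s) s)
    (hode : ∀ s ∈ Ioo 0 b, φ s - s * φ' s + (b ^ 2 - s ^ 2) * φ'' s = 0) :
    ∃ c₁ c₂ : ℝ, ∀ s ∈ Ioo 0 b, φ s = c₁ * s + c₂ * Real.sqrt (b ^ 2 - s ^ 2) := by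
  have hsq : ∀ s ∈ Ioo 0 b, s ^ 2 < b ^ 2 := fun s hs =>
    pow_lt_pow_left₀ hs.2 hs.1.le two_ne_zero
  obtain ⟨k₁, hk₁⟩ := exists_eq_const_of_hasDerivAt_zero isOpen_Ioo isPreconnected_Ioo
    fun s hs => hasDerivAt_sub_mul_deriv_mul_sqrt (hd1 s hs) (hd2 s hs) (hode s hs) (hsq s hs)
  obtain ⟨k₂, hk₂⟩ := exists_eq_const_of_hasDerivAt_zero isOpen_Ioo isPreconnected_Ioo
    fun s hs => hasDerivAt_mul_add_sq_sub_sq_mul_deriv (hd1 s hs) (hd2 s hs) (hode s hs)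
  refine ⟨k₂ / b ^ 2, k₁ / b ^ 2, fun s hs => ?_⟩
  have hb : b ≠ 0 := (hs.1.trans hs.2).ne'
  have hv : √(b ^ 2 - s ^ 2) * √(b ^ 2 - s ^ 2) = b ^ 2 - s ^ 2 :=
    Real.mul_self_sqrt (sub_nonneg.2 (hsq s hs).le)
  field_simp
  linear_combination s * hk₂ s hs + √(b ^ 2 - s ^ 2) * hk₁ s hs - (φ s - s * φ' s) * hv

/-- Every twice-differentiable solution of `φ − sφ' + (b²−s²)φ'' = 0` on `(0,b)`
is of the form `φ(s) = c₁ s + c₂ √(b²−s²)`. -/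
theorem stmt2 (b : ℝ) (hb : 0 < b) (φ φ' φ'' : ℝ → ℝ)
    (hd1 : ∀ s ∈ Ioo 0 b, HasDerivAt φ (φ' s) s)
    (hd2 : ∀ s ∈ Ioo 0 b, HasDerivAt φ' (φ'' s) s)
    (hode : ∀ s ∈ Ioo 0 b, φ s - s * φ' s + (b ^ 2 - s ^ 2) * φ'' s = 0) :
    ∃ c₁ c₂ : ℝ, ∀ s ∈ Ioo 0 b, φ s = c₁ * s + c₂ * Real.sqrt (b ^ 2 - s ^ 2) :=
  stmt2_general b φ φ' φ'' hd1 hd2 hode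
end

section
/- Let b > 0, c a constant with c·b² ≠ 0, and let Q(s) = (c(b² − s²) − 1)/s on an interval where s > 0 and 1 + sQ(s) = c(b² − s²) ≠ 0. Then Q(s)/(1 + sQ(s)) = 1/s − 1/(c·s·(b² − s²)), and consequently the function φ(s) = c₃·s^((cb²−1)/(cb²))·(cb² − cs²)^(1/(2cb²)) satisfies φ'(s)/φ(s) = Q(s)/(1 + sQ(s)) on that interval (for any constant c₃ > 0). -/
/-
Since `1 + sQ = c(b² − s²)`, the quotient `Q/(1 + sQ)` splits by partial fractions,
`1/(s(b² − s²)) = (1/b²)(1/s + s/(b² − s²))`, into `(1 − 1/(cb²))/s − s/(b²(cb² − cs²))`.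
These are exactly the logarithmic derivatives of `s^((cb²−1)/(cb²))` and of
`(cb² − cs²)^(1/(2cb²))`, and the logarithmic derivative of a product is the sum of those
of its factors.
-/

theorem Real.logDeriv_rpow_const {f : ℝ → ℝ} {x : ℝ} (p : ℝ) (hf : DifferentiableAt ℝ f x)
    (hx : 0 < f x) : logDeriv (fun t => f t ^ p) x = p * logDeriv f x := by
  rw [logDeriv_apply, logDeriv_apply, (hf.hasDerivAt.rpow_const (Or.inl hx.ne')).deriv,
    Real.rpow_sub hx, Real.rpow_one]
  field_simp [(Real.rpow_pos_of_pos hx p).ne']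

theorem logDeriv_const_mul_rpow_mul_rpow {g : ℝ → ℝ} {s : ℝ} (C p q : ℝ) (hC : C ≠ 0)
    (hs : 0 < s) (hg : DifferentiableAt ℝ g s) (hgs : 0 < g s) :
    logDeriv (fun t => C * t ^ p * g t ^ q) s = p / s + q * logDeriv g s := by
  have hpow : DifferentiableAt ℝ (fun t : ℝ => t ^ p) s :=
    differentiableAt_id.rpow_const (Or.inl hs.ne')
  rw [logDeriv_mul s (by positivity) (Real.rpow_pos_of_pos hgs q).ne'
      (hpow.const_mul C) (hg.rpow_const (Or.inl hgs.ne')),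
    logDeriv_const_mul s C hC, Real.logDeriv_rpow_const q hg hgs,
    Real.logDeriv_rpow_const (f := fun t => t) p differentiableAt_id hs, logDeriv_id', mul_one_div]

theorem logDeriv_const_sub_mul_sq (k c s : ℝ) :
    logDeriv (fun t => k - c * t ^ 2) s = -(2 * c * s) / (k - c * s ^ 2) := by
  have h : HasDerivAt (fun t => k - c * t ^ 2) (-(2 * c * s)) s := by
    simpa [mul_comm, mul_left_comm] using ((hasDerivAt_pow 2 s).const_mul c).const_sub k
  rw [logDeriv_apply, h.deriv]

theorem sub_one_div_div_one_add_mul {K : Type*} [Field K] {a s : K} (hs : s ≠ 0) (ha : a ≠ 0) :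
    (a - 1) / s / (1 + s * ((a - 1) / s)) = 1 / s - 1 / (s * a) := by
  rw [mul_div_cancel₀ _ hs, add_sub_cancel]
  field_simp

theorem exponents_logDeriv_sum {b c s : ℝ} (hc : c ≠ 0) (hb : b ≠ 0) (hs : s ≠ 0)
    (hbs : b ^ 2 - s ^ 2 ≠ 0) :
    (c * b ^ 2 - 1) / (c * b ^ 2) / s
        + 1 / (2 * c * b ^ 2) * (-(2 * c * s) / (c * b ^ 2 - c * s ^ 2))
      = 1 / s - 1 / (c * s * (b ^ 2 - s ^ 2)) := by
  rw [← mul_sub]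
  field_simp
  ring

theorem stmt8_general (b c c₃ : ℝ) (hc₃ : 0 < c₃)
    (I : Set ℝ)
    (hI : ∀ s ∈ I, 0 < s ∧ s < b ∧ 0 < c * (b ^ 2 - s ^ 2))
    (Q : ℝ → ℝ) (hQ : ∀ s, Q s = (c * (b ^ 2 - s ^ 2) - 1) / s)
    (φ : ℝ → ℝ)
    (hφ : ∀ s, φ s = c₃ * s ^ ((c * b ^ 2 - 1) / (c * b ^ 2))
        * (c * b ^ 2 - c * s ^ 2) ^ (1 / (2 * c * b ^ 2))) :
    ∀ s ∈ I,
      Q s / (1 + s * Q s) = 1 / s - 1 / (c * s * (b ^ 2 - s ^ 2)) ∧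
      deriv φ s / φ s = Q s / (1 + s * Q s) := by
  intro s hs
  obtain ⟨hs0, hsb, hpos⟩ := hI s hs
  have hc : c ≠ 0 := left_ne_zero_of_mul hpos.ne'
  have hbs : b ^ 2 - s ^ 2 ≠ 0 := right_ne_zero_of_mul hpos.ne'
  have hg : 0 < c * b ^ 2 - c * s ^ 2 := by rwa [← mul_sub]
  have hQs : Q s / (1 + s * Q s) = 1 / s - 1 / (c * s * (b ^ 2 - s ^ 2)) := by
    rw [hQ, sub_one_div_div_one_add_mul hs0.ne' hpos.ne', mul_left_comm, mul_assoc]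
  refine ⟨hQs, ?_⟩
  rw [hQs, ← logDeriv_apply, funext hφ,
    logDeriv_const_mul_rpow_mul_rpow c₃ _ _ hc₃.ne' hs0 (by fun_prop) hg,
    logDeriv_const_sub_mul_sq]
  exact exponents_logDeriv_sum hc (hs0.trans hsb).ne' hs0.ne' hbs

/-- For `Q(s) = (c(b²−s²) − 1)/s` on an open interval where `0 < s < b` and
`c(b²−s²) > 0` (with `cb² ≠ 0`), one has `Q/(1+sQ) = 1/s − 1/(cs(b²−s²))`, and the
function `φ(s) = c₃ s^((cb²−1)/(cb²)) (cb²−cs²)^(1/(2cb²))` (for `c₃ > 0`)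
satisfies `φ'/φ = Q/(1+sQ)` there. -/
theorem stmt8 (b c c₃ : ℝ) (hb : 0 < b) (hc : c * b ^ 2 ≠ 0) (hc₃ : 0 < c₃)
    (I : Set ℝ) (hIopen : IsOpen I)
    (hI : ∀ s ∈ I, 0 < s ∧ s < b ∧ 0 < c * (b ^ 2 - s ^ 2))
    (Q : ℝ → ℝ) (hQ : ∀ s, Q s = (c * (b ^ 2 - s ^ 2) - 1) / s)
    (φ : ℝ → ℝ)
    (hφ : ∀ s, φ s = c₃ * s ^ ((c * b ^ 2 - 1) / (c * b ^ 2))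
        * (c * b ^ 2 - c * s ^ 2) ^ (1 / (2 * c * b ^ 2))) :
    ∀ s ∈ I,
      Q s / (1 + s * Q s) = 1 / s - 1 / (c * s * (b ^ 2 - s ^ 2)) ∧
      deriv φ s / φ s = Q s / (1 + s * Q s) :=
  stmt8_general b c c₃ hc₃ I hI Q hQ φ hφ
end

section
/- Let b > 0, c₃ > 0, and φ(s) = c₃·s^((cb²−1)/(cb²))·(cb² − cs²)^(1/(2cb²)) on an interval where 0 < s < b and c(b²−s²) > 0, with cb² ≠ 0. Then Q(s) := φ'(s)/(φ(s) − sφ'(s)) satisfies the linear ODE Q'(s) + (1/s + 2s/(b²−s²))Q(s) = −2/(b²−s²). -/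
open Set Filter

/-!
The logarithmic derivative of `φ` is `L = α/s − s/(cb²(b² − s²))` with `α = (cb² − 1)/(cb²)`,
so `Q = L/(1 − sL)` collapses to the rational function `(cb² − 1)/s − cs`, for which the
ODE is an identity of rational functions.
-/

noncomputable def shenPhi (b c c₃ x : ℝ) : ℝ :=
  c₃ * x ^ ((c * b ^ 2 - 1) / (c * b ^ 2)) * (c * b ^ 2 - c * x ^ 2) ^ (1 / (2 * c * b ^ 2))

noncomputable def shenQ (b c x : ℝ) : ℝ :=
  (c * b ^ 2 - 1) / x - c * x

theorem hasDerivAt_mul_rpow_mul_rpow_sub_sq (c₃ α β a c : ℝ) {s : ℝ} (hs : 0 < s)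
    (ha : 0 < a - c * s ^ 2) :
    HasDerivAt (fun x => c₃ * x ^ α * (a - c * x ^ 2) ^ β)
      (c₃ * s ^ α * (a - c * s ^ 2) ^ β * (α / s - 2 * c * β * s / (a - c * s ^ 2))) s := by
  have hpow : HasDerivAt (fun x : ℝ => x ^ α) (α * s ^ (α - 1)) s :=
    Real.hasDerivAt_rpow_const (Or.inl hs.ne')
  have hinner : HasDerivAt (fun x : ℝ => a - c * x ^ 2) (-(c * (2 * s))) s := by
    simpa using ((hasDerivAt_pow 2 s).const_mul c).const_sub a
  refine ((hpow.const_mul c₃).mul (hinner.rpow_const (p := β) (Or.inl ha.ne'))).congr_deriv ?_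
  rw [Real.rpow_sub hs, Real.rpow_sub ha, Real.rpow_one, Real.rpow_one]
  field_simp
  ring

theorem shenPhi_deriv_div_eq_shenQ {b c c₃ s : ℝ} (hc₃ : c₃ ≠ 0) (hs : 0 < s) (hsb : s < b)
    (hcs : 0 < c * (b ^ 2 - s ^ 2)) :
    deriv (shenPhi b c c₃) s / (shenPhi b c c₃ s - s * deriv (shenPhi b c c₃) s)
      = shenQ b c s := by
  have hbs : 0 < b ^ 2 - s ^ 2 := by nlinarith
  have hc : 0 < c := pos_of_mul_pos_left hcs hbs.le
  have hb : b ≠ 0 := (hs.trans hsb).ne'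
  have hbase : 0 < c * b ^ 2 - c * s ^ 2 := by linarith [mul_sub c (b ^ 2) (s ^ 2)]
  have hderiv : HasDerivAt (shenPhi b c c₃) _ s :=
    hasDerivAt_mul_rpow_mul_rpow_sub_sq c₃ _ _ _ c hs hbase
  have hA := (Real.rpow_pos_of_pos hs ((c * b ^ 2 - 1) / (c * b ^ 2))).ne'
  have hB := (Real.rpow_pos_of_pos hbase (1 / (2 * c * b ^ 2))).ne'
  rw [hderiv.deriv, shenPhi, shenQ]
  field_simp
  -- `field_simp` cannot see that the numerator of `1 − sL` is the constant `b²`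
  rw [show c * b ^ 2 * (b ^ 2 - s ^ 2) - ((c * b ^ 2 - 1) * (b ^ 2 - s ^ 2) - s ^ 2) = b ^ 2 by
    ring]
  field_simp
  ring

theorem deriv_shenQ_add_mul_shenQ (b c : ℝ) {s : ℝ} (hs : s ≠ 0) (hbs : b ^ 2 - s ^ 2 ≠ 0) :
    deriv (shenQ b c) s + (1 / s + 2 * s / (b ^ 2 - s ^ 2)) * shenQ b c s
      = -2 / (b ^ 2 - s ^ 2) := by
  have hder : HasDerivAt (shenQ b c) ((c * b ^ 2 - 1) * -(s ^ 2)⁻¹ - c) s := by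
    unfold shenQ
    simpa [div_eq_mul_inv, Pi.sub_def] using
      ((hasDerivAt_inv hs).const_mul (c * b ^ 2 - 1)).sub ((hasDerivAt_id s).const_mul c)
  rw [hder.deriv, shenQ]
  field_simp
  ring

theorem stmt9_general (b c c₃ : ℝ) (hc₃ : 0 < c₃)
    (I : Set ℝ) (hIopen : IsOpen I)
    (hI : ∀ s ∈ I, 0 < s ∧ s < b ∧ 0 < c * (b ^ 2 - s ^ 2))
    (φ : ℝ → ℝ)
    (hφ : ∀ s, φ s = c₃ * s ^ ((c * b ^ 2 - 1) / (c * b ^ 2))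
        * (c * b ^ 2 - c * s ^ 2) ^ (1 / (2 * c * b ^ 2)))
    (Q : ℝ → ℝ) (hQ : ∀ s, Q s = deriv φ s / (φ s - s * deriv φ s)) :
    ∀ s ∈ I,
      deriv Q s + (1 / s + 2 * s / (b ^ 2 - s ^ 2)) * Q s = -2 / (b ^ 2 - s ^ 2) := by
  obtain rfl : φ = shenPhi b c c₃ := funext hφ
  have hQ_eqOn : EqOn Q (shenQ b c) I := fun t ht => by
    obtain ⟨ht, htb, hct⟩ := hI t ht
    rw [hQ, shenPhi_deriv_div_eq_shenQ hc₃.ne' ht htb hct]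
  intro s hs
  obtain ⟨hs0, hsb, -⟩ := hI s hs
  rw [(hQ_eqOn.eventuallyEq_of_mem (hIopen.mem_nhds hs)).deriv_eq, hQ_eqOn hs]
  exact deriv_shenQ_add_mul_shenQ b c hs0.ne' (by nlinarith)

/-- Shen's Berwald-class function `φ(s) = c₃ s^((cb²−1)/(cb²)) (cb²−cs²)^(1/(2cb²))`
has `Q = φ'/(φ − sφ')` satisfying the T-condition ODE
`Q' + (1/s + 2s/(b²−s²))Q = −2/(b²−s²)`. -/
theorem stmt9 (b c c₃ : ℝ) (hb : 0 < b) (hc : c * b ^ 2 ≠ 0) (hc₃ : 0 < c₃)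
    (I : Set ℝ) (hIopen : IsOpen I)
    (hI : ∀ s ∈ I, 0 < s ∧ s < b ∧ 0 < c * (b ^ 2 - s ^ 2))
    (φ : ℝ → ℝ)
    (hφ : ∀ s, φ s = c₃ * s ^ ((c * b ^ 2 - 1) / (c * b ^ 2))
        * (c * b ^ 2 - c * s ^ 2) ^ (1 / (2 * c * b ^ 2)))
    (Q : ℝ → ℝ) (hQ : ∀ s, Q s = deriv φ s / (φ s - s * deriv φ s)) :
    ∀ s ∈ I,
      deriv Q s + (1 / s + 2 * s / (b ^ 2 - s ^ 2)) * Q s = -2 / (b ^ 2 - s ^ 2) :=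
  stmt9_general b c c₃ hc₃ I hIopen hI φ hφ Q hQ
end

section
/- Let n ≥ 3 and let (h_{ij}) be a symmetric n×n real matrix of rank at least 2, and (m_i) a nonzero vector with h_{ij} interpreted via a positive definite metric a^{ij} such that a^{ij}h_{ij} = n−1, h_{ij}m^j = m_i, and m² := m_i m^i ≠ 0. If real numbers Φ, Ψ, Ω satisfy Φ(h_{hi}h_{jk}+h_{hj}h_{ik}+h_{hk}h_{ij}) + Ψ(h_{hk}m_im_j + h_{hj}m_im_k + h_{hi}m_jm_k + h_{ij}m_hm_k + h_{jk}m_im_h + h_{ik}m_jm_h) + Ω·m_hm_im_jm_k = 0 for all indices h,i,j,k, then Φ = Ψ = Ω = 0. -/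
open Matrix

/-!
Write `s = m_i M^i`. Contracting the identity once and then twice with `M` (using `h M = m`)
gives `α (s h + 2 m ⊗ m) + β s (m ⊗ m) = 0` with `α = Φ + s Ψ` and `β = 3 Ψ + s Ω`.
If `α ≠ 0` this makes `h` a multiple of `m ⊗ m`, against `rank h ≥ 2`; so `α = 0`, and then
`β = 0`. Once `α = β = 0`, the whole identity collapses to `Φ · Sym(Q ⊗ Q) = 0` for
`Q = s h - m ⊗ m`. The symmetrized square of a matrix only vanishes for `Q = 0`, which again
contradicts `rank h ≥ 2` unless `Φ = 0`.
-/

variable {K ι : Type*} [Field K]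

def symmSq (Q : Matrix ι ι K) (i j k l : ι) : K :=
  Q i j * Q k l + Q i k * Q j l + Q i l * Q j k

theorem eq_zero_of_symmSq_eq_zero [CharZero K] {Q : Matrix ι ι K}
    (hQ : ∀ i j k l, symmSq Q i j k l = 0) : Q = 0 := by
  unfold symmSq at hQ
  have hdiag : ∀ i, Q i i = 0 := fun i => by
    have : (3 : K) * Q i i ^ 2 = 0 := by linear_combination hQ i i i i
    simpa using this
  ext i k
  have : (2 : K) * Q i k ^ 2 = 0 := by linear_combination hQ i i k k - Q k k * hdiag i
  simpa using this

/-- The left-hand side of the T-condition. -/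
def tTensor (Φ Ψ Ω : K) (h : Matrix ι ι K) (m : ι → K) (i j k l : ι) : K :=
  Φ * symmSq h i j k l
    + Ψ * (h i l * m j * m k + h i k * m j * m l + h i j * m k * m l
        + h j k * m i * m l + h k l * m j * m i + h j l * m k * m i)
    + Ω * (m i * m j * m k * m l)

theorem tTensor_eq_symmSq (h : Matrix ι ι K) (m : ι → K) {s : K} (Φ Ψ Ω : K)
    (hα : Φ + s * Ψ = 0) (hβ : 3 * Ψ + s * Ω = 0) (i j k l : ι) :
    s ^ 2 * tTensor Φ Ψ Ω h m i j k l = Φ * symmSq (s • h - vecMulVec m m) i j k l := by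
  simp only [tTensor, symmSq, Matrix.sub_apply, Matrix.smul_apply, vecMulVec_apply, smul_eq_mul]
  linear_combination
    (s * (h i l * m j * m k + h i k * m j * m l + h i j * m k * m l
        + h j k * m i * m l + h k l * m j * m i + h j l * m k * m i)
      - 3 * (m i * m j * m k * m l)) * hα
    + s * (m i * m j * m k * m l) * hβ

theorem Matrix.rank_le_one_of_smul_eq_vecMulVec {κ : Type*} [Fintype ι] {A : Matrix κ ι K}
    {c : K} (hc : c ≠ 0) {u : κ → K} {v : ι → K} (hA : c • A = vecMulVec u v) :
    A.rank ≤ 1 := by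
  rw [← rank_smul_of_mem_nonZeroDivisors A (mem_nonZeroDivisors_of_ne_zero hc), hA]
  exact rank_vecMulVec_le u v

section Contraction

variable [Fintype ι] {h : Matrix ι ι K} {m M : ι → K}

theorem cubic_eq_zero_of_tTensor_eq_zero {Φ Ψ Ω : K} (hhm : ∀ i, ∑ j, h i j * M j = m i)
    (hT : ∀ i j k l, tTensor Φ Ψ Ω h m i j k l = 0) (i j k : ι) :
    (Φ + m ⬝ᵥ M * Ψ) * (h i j * m k + h i k * m j + h j k * m i)
      + (3 * Ψ + m ⬝ᵥ M * Ω) * (m i * m j * m k) = 0 := by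
  have hterm : ∀ l, tTensor Φ Ψ Ω h m i j k l * M l
      = Φ * h i j * (h k l * M l) + Φ * h i k * (h j l * M l) + Φ * h j k * (h i l * M l)
        + Ψ * (m j * m k) * (h i l * M l) + Ψ * (m j * m i) * (h k l * M l)
        + Ψ * (m k * m i) * (h j l * M l)
        + (Ψ * (h i k * m j + h i j * m k + h j k * m i) + Ω * (m i * m j * m k))
          * (m l * M l) := fun l => by
    simp only [tTensor, symmSq]
    ring
  calc _ = ∑ l, tTensor Φ Ψ Ω h m i j k l * M l := by
        simp only [hterm, Finset.sum_add_distrib, ← Finset.mul_sum, hhm, dotProduct]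
        ring
    _ = 0 := Finset.sum_eq_zero fun l _ => by rw [hT, zero_mul]

theorem quadratic_eq_zero_of_cubic_eq_zero {a b : K} (hhm : ∀ i, ∑ j, h i j * M j = m i)
    (hC : ∀ i j k, a * (h i j * m k + h i k * m j + h j k * m i) + b * (m i * m j * m k) = 0)
    (i j : ι) :
    a * (m ⬝ᵥ M * h i j + 2 * (m i * m j)) + b * (m ⬝ᵥ M * (m i * m j)) = 0 := by
  have hterm : ∀ k, (a * (h i j * m k + h i k * m j + h j k * m i) + b * (m i * m j * m k)) * M k
      = (a * h i j + b * (m i * m j)) * (m k * M k) + a * m j * (h i k * M k)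
        + a * m i * (h j k * M k) := fun k => by ring
  calc _ = ∑ k, (a * (h i j * m k + h i k * m j + h j k * m i) + b * (m i * m j * m k))
          * M k := by
        simp only [hterm, Finset.sum_add_distrib, ← Finset.mul_sum, hhm, dotProduct]
        ring
    _ = 0 := Finset.sum_eq_zero fun k _ => by rw [hC, zero_mul]

end Contraction

section Rank

variable [Fintype ι] {h : Matrix ι ι K} {m : ι → K} {s : K}

theorem eq_zero_of_quadratic_eq_zero (hrank : 2 ≤ h.rank) (hs : s ≠ 0) (hm : m ≠ 0) {a b : K}
    (hQ : ∀ i j, a * (s * h i j + 2 * (m i * m j)) + b * (s * (m i * m j)) = 0) :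
    a = 0 ∧ b = 0 := by
  have ha : a = 0 := by
    by_contra ha
    have hmul : (a * s) • h = vecMulVec (-(2 * a + b * s) • m) m := by
      ext i j
      simp only [Matrix.smul_apply, vecMulVec_apply, Pi.smul_apply, smul_eq_mul]
      linear_combination hQ i j
    have := rank_le_one_of_smul_eq_vecMulVec (mul_ne_zero ha hs) hmul
    omega
  obtain ⟨i, hi⟩ : ∃ i, m i ≠ 0 := Function.ne_iff.mp hm
  have hb : b * s * m i ^ 2 = 0 := by linear_combination hQ i i - (s * h i i + 2 * m i ^ 2) * ha
  exact ⟨ha, by simpa [hs, hi] using hb⟩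

theorem eq_zero_of_tTensor_eq_zero [CharZero K] (hrank : 2 ≤ h.rank) (hs : s ≠ 0) {Φ Ψ Ω : K}
    (hα : Φ + s * Ψ = 0) (hβ : 3 * Ψ + s * Ω = 0)
    (hT : ∀ i j k l, tTensor Φ Ψ Ω h m i j k l = 0) : Φ = 0 := by
  by_contra hΦ
  have hQ : s • h - vecMulVec m m = 0 := eq_zero_of_symmSq_eq_zero fun i j k l => by
    have := tTensor_eq_symmSq h m Φ Ψ Ω hα hβ i j k l
    rw [hT, mul_zero, eq_comm, mul_eq_zero] at this
    exact this.resolve_left hΦ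
  have := rank_le_one_of_smul_eq_vecMulVec hs (sub_eq_zero.mp hQ)
  omega

end Rank

theorem stmt10_general (n : ℕ)
    (h : Matrix (Fin n) (Fin n) ℝ) (hrank : 2 ≤ h.rank)
    (m : Fin n → ℝ)
    (M : Fin n → ℝ)
    (hhm : ∀ i, ∑ j, h i j * M j = m i)
    (hm2 : ∑ i, m i * M i ≠ 0)
    (Φ Ψ Ω : ℝ)
    (hT : ∀ i j k l : Fin n,
      Φ * (h i j * h k l + h i k * h j l + h i l * h j k)
        + Ψ * (h i l * m j * m k + h i k * m j * m l + h i j * m k * m l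
            + h j k * m i * m l + h k l * m j * m i + h j l * m k * m i)
        + Ω * (m i * m j * m k * m l) = 0) :
    Φ = 0 ∧ Ψ = 0 ∧ Ω = 0 := by
  have hs : m ⬝ᵥ M ≠ 0 := hm2
  have hm : m ≠ 0 := fun hm0 => hs (by rw [hm0, zero_dotProduct])
  have hquad := quadratic_eq_zero_of_cubic_eq_zero hhm (cubic_eq_zero_of_tTensor_eq_zero hhm hT)
  obtain ⟨hα, hβ⟩ := eq_zero_of_quadratic_eq_zero hrank hs hm hquad
  have hΦ : Φ = 0 := eq_zero_of_tTensor_eq_zero hrank hs hα hβ hT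
  have hΨ : Ψ = 0 := by simpa [hΦ, hs] using hα
  have hΩ : Ω = 0 := by simpa [hΨ, hs] using hβ
  exact ⟨hΦ, hΨ, hΩ⟩

/-- Algebraic core of the T-condition theorem: if the symmetrized combination of `h` and `m`
with coefficients `Φ, Ψ, Ω` vanishes, where `h` is a symmetric matrix of rank at least `2`,
`m` is nonzero, indices are raised with a positive definite metric `A = (a^{ij})`, with
`a^{ij}h_{ij} = n − 1`, `h_{ij}m^j = m_i` and `m² = m_i m^i ≠ 0`, then `Φ = Ψ = Ω = 0`. -/
theorem stmt10 (n : ℕ) (hn : 3 ≤ n)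
    (A : Matrix (Fin n) (Fin n) ℝ) (hA : A.PosDef)
    (h : Matrix (Fin n) (Fin n) ℝ) (hsymm : h.IsSymm) (hrank : 2 ≤ h.rank)
    (m : Fin n → ℝ) (hm : m ≠ 0)
    (M : Fin n → ℝ) (hM : ∀ i, M i = ∑ j, A i j * m j)
    (htrace : ∑ i, ∑ j, A i j * h i j = (n : ℝ) - 1)
    (hhm : ∀ i, ∑ j, h i j * M j = m i)
    (hm2 : ∑ i, m i * M i ≠ 0)
    (Φ Ψ Ω : ℝ)
    (hT : ∀ i j k l : Fin n,
      Φ * (h i j * h k l + h i k * h j l + h i l * h j k)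
        + Ψ * (h i l * m j * m k + h i k * m j * m l + h i j * m k * m l
            + h j k * m i * m l + h k l * m j * m i + h j l * m k * m i)
        + Ω * (m i * m j * m k * m l) = 0) :
    Φ = 0 ∧ Ψ = 0 ∧ Ω = 0 :=
  stmt10_general n h hrank m M hhm hm2 Φ Ψ Ω hT
end
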